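/- If R is a Γ-Armendariz ring and R is a right SA-ring, then the Hahn series ring R((Γ)) is a right SA-ring. -/

import Mathlib

/-- A two-sided ideal (as a subset). -/
def IsTwoSidedIdeal {S : Type*} [Ring S] (I : Set S) : Prop :=
  0 ∈ I ∧ (∀ a ∈ I, ∀ b ∈ I, a + b ∈ I) ∧ (∀ a ∈ I, -a ∈ I) ∧
    (∀ a ∈ I, ∀ r : S, a * r ∈ I) ∧ ∀ a ∈ I, ∀ r : S, r * a ∈ I

/-- The right annihilator of a subset. -/
def rAnn {S : Type*} [Ring S] (X : Set S) : Set S := {r : S | ∀ x ∈ X, x * r = 0}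

/-- A ring `S` is a right SA-ring if for any two ideals `I`, `J` there is an
ideal `K` with `r(I) + r(J) = r(K)`. -/
def IsRightSA (S : Type*) [Ring S] : Prop :=
  ∀ I J : Set S, IsTwoSidedIdeal I → IsTwoSidedIdeal J →
    ∃ K : Set S, IsTwoSidedIdeal K ∧
      {x : S | ∃ y ∈ rAnn I, ∃ z ∈ rAnn J, x = y + z} = rAnn K

/-- `R` is `Γ`-Armendariz: whenever a product of Hahn series vanishes, all
products of their coefficients vanish. -/
def IsGammaArmendariz (R : Type*) [Ring R] (Γ : Type*)
    [AddCommGroup Γ] [LinearOrder Γ] [IsOrderedAddMonoid Γ] : Prop :=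
  ∀ f g : HahnSeries Γ R, f * g = 0 → ∀ γ δ : Γ, f.coeff γ * g.coeff δ = 0

/-!
For an ideal `I` of `R((Γ))`, the coefficients of its elements form an ideal `I₀` of `R`
(multiplying by monomials shifts and scales coefficients), and by the Armendariz property a Hahn
series lies in `r(I)` exactly when all of its coefficients lie in `r(I₀)`. If `K₀` witnesses the SA
property of `R` for `I₀, J₀`, take `K` to be the Hahn series with all coefficients in `K₀`: `r(K)`
consists of the series with coefficients in `r(K₀) = r(I₀) + r(J₀)`, and such a series splits
coefficientwise into a sum of a series with coefficients in `r(I₀)` and one with coefficients in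
`r(J₀)`, splitting `0` as `0 + 0` so that both summands have partially well-ordered support.
-/

open scoped Pointwise

lemma IsTwoSidedIdeal.sum_mem {S ι : Type*} [Ring S] {K : Set S} (hK : IsTwoSidedIdeal K)
    (s : Finset ι) {F : ι → S} (hF : ∀ i ∈ s, F i ∈ K) : ∑ i ∈ s, F i ∈ K := by
  classical
  induction s using Finset.induction_on with
  | empty => simpa using hK.1
  | insert a s ha ih =>
    rw [Finset.sum_insert ha]
    exact hK.2.1 _ (hF a (s.mem_insert_self a)) _
      (ih fun i hi => hF i (Finset.mem_insert_of_mem hi))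

lemma zero_mem_rAnn {S : Type*} [Ring S] (X : Set S) : (0 : S) ∈ rAnn X :=
  fun x _ => mul_zero x

lemma setOf_exists_eq_add {S : Type*} [Add S] (A B : Set S) :
    {x : S | ∃ y ∈ A, ∃ z ∈ B, x = y + z} = A + B := by
  ext x
  simp only [Set.mem_ofPred_eq, Set.mem_add, eq_comm]

namespace HahnSeries

variable {R Γ : Type*}

section PartialOrder

variable [PartialOrder Γ]

def coeffSet [Zero R] (I : Set (HahnSeries Γ R)) : Set R :=
  {a : R | ∃ f ∈ I, ∃ γ : Γ, f.coeff γ = a}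

def withCoeffsIn [Zero R] (A : Set R) : Set (HahnSeries Γ R) :=
  {f | ∀ γ, f.coeff γ ∈ A}

lemma withCoeffsIn_add [AddCommGroup R] {A B : Set R} (hA : (0 : R) ∈ A) (hB : (0 : R) ∈ B) :
    withCoeffsIn (Γ := Γ) (A + B) = withCoeffsIn A + withCoeffsIn B := by
  ext g
  constructor
  · intro hg
    have hsplit : ∀ δ, ∃ u ∈ A, ∃ v ∈ B, u + v = g.coeff δ ∧ (g.coeff δ = 0 → u = 0) := by
      intro δ
      by_cases h : g.coeff δ = 0
      · exact ⟨0, hA, 0, hB, by rw [h, add_zero], fun _ => rfl⟩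
      · obtain ⟨u, hu, v, hv, huv⟩ := Set.mem_add.1 (hg δ)
        exact ⟨u, hu, v, hv, huv, fun h' => absurd h' h⟩
    choose u hu v hv huv hu0 using hsplit
    have hsupp : Function.support u ⊆ g.support := fun δ hδ hg0 => hδ (hu0 δ hg0)
    let y : HahnSeries Γ R := ⟨u, g.isPWO_support.mono hsupp⟩
    have hz : ∀ δ, (g - y).coeff δ = v δ := fun δ => by
      rw [coeff_sub, ← huv δ]
      exact add_sub_cancel_left (u δ) (v δ)
    exact ⟨y, hu, g - y, fun δ => hz δ ▸ hv δ, add_sub_cancel y g⟩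
  · rintro ⟨y, hy, z, hz, rfl⟩ δ
    exact Set.add_mem_add (hy δ) (hz δ)

end PartialOrder

section OrderedCancelAddMonoid

variable [Ring R] [PartialOrder Γ] [AddCommMonoid Γ] [IsOrderedCancelAddMonoid Γ]

lemma mul_eq_zero_of_coeff_mul_coeff_eq_zero {f g : HahnSeries Γ R}
    (h : ∀ γ δ : Γ, f.coeff γ * g.coeff δ = 0) : f * g = 0 := by
  ext a
  rw [coeff_mul]
  exact Finset.sum_eq_zero fun ij _ => h _ _

lemma isTwoSidedIdeal_withCoeffsIn {K : Set R} (hK : IsTwoSidedIdeal K) :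
    IsTwoSidedIdeal (withCoeffsIn (Γ := Γ) K) := by
  have ⟨h0, hadd, hneg, hmr, hml⟩ := hK
  refine ⟨fun _ => h0, ?_, ?_, ?_, ?_⟩
  · intro f hf g hg γ
    rw [coeff_add]
    exact hadd _ (hf γ) _ (hg γ)
  · intro f hf γ
    rw [coeff_neg]
    exact hneg _ (hf γ)
  · intro f hf r γ
    rw [coeff_mul]
    exact hK.sum_mem _ fun ij _ => hmr _ (hf ij.1) _
  · intro f hf r γ
    rw [coeff_mul]
    exact hK.sum_mem _ fun ij _ => hml _ (hf ij.2) _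

lemma rAnn_withCoeffsIn {K : Set R} (hK : (0 : R) ∈ K) :
    rAnn (withCoeffsIn (Γ := Γ) K) = withCoeffsIn (rAnn K) := by
  classical
  ext g
  constructor
  · intro hg δ k hk
    have hk' : single (0 : Γ) k ∈ withCoeffsIn K := by
      intro γ
      rw [coeff_single]
      split_ifs
      exacts [hk, hK]
    simpa [coeff_single_zero_mul] using congr_arg (coeff · δ) (hg _ hk')
  · intro hg f hf
    exact mul_eq_zero_of_coeff_mul_coeff_eq_zero fun γ δ => hg δ _ (hf γ)

end OrderedCancelAddMonoid

variable [Ring R] [AddCommGroup Γ]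

lemma isTwoSidedIdeal_coeffSet [PartialOrder Γ] [IsOrderedAddMonoid Γ]
    {I : Set (HahnSeries Γ R)} (hI : IsTwoSidedIdeal I) :
    IsTwoSidedIdeal (coeffSet I) := by
  obtain ⟨h0, hadd, hneg, hmr, hml⟩ := hI
  refine ⟨⟨0, h0, 0, rfl⟩, ?_, ?_, ?_, ?_⟩
  · rintro _ ⟨f, hf, γ, rfl⟩ _ ⟨g, hg, δ, rfl⟩
    -- shift `g` so that its `δ`-coefficient sits at `γ`
    refine ⟨f + g * single (γ - δ) 1, hadd _ hf _ (hmr g hg _), γ, ?_⟩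
    rw [coeff_add, coeff_mul_single, sub_sub_cancel, mul_one]
  · rintro _ ⟨f, hf, γ, rfl⟩
    exact ⟨-f, hneg f hf, γ, rfl⟩
  · rintro _ ⟨f, hf, γ, rfl⟩ r
    exact ⟨f * single 0 r, hmr f hf _, γ, coeff_mul_single_zero⟩
  · rintro _ ⟨f, hf, γ, rfl⟩ r
    exact ⟨single 0 r * f, hml f hf _, γ, coeff_single_zero_mul⟩

lemma rAnn_eq_withCoeffsIn_rAnn_coeffSet [LinearOrder Γ] [IsOrderedAddMonoid Γ]
    (hArm : IsGammaArmendariz R Γ) (I : Set (HahnSeries Γ R)) :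
    rAnn I = withCoeffsIn (rAnn (coeffSet I)) := by
  ext g
  constructor
  · rintro hg δ _ ⟨f, hf, γ, rfl⟩
    exact hArm f g (hg f hf) γ δ
  · intro hg f hf
    exact mul_eq_zero_of_coeff_mul_coeff_eq_zero fun γ δ => hg δ _ ⟨f, hf, γ, rfl⟩

end HahnSeries

open HahnSeries in
/-- If `R` is `Γ`-Armendariz and a right SA-ring, then the Hahn series ring
`R((Γ))` is a right SA-ring. -/
theorem rightSA_hahnSeries_of_rightSA {R : Type*} [Ring R] (Γ : Type*)
    [AddCommGroup Γ] [LinearOrder Γ] [IsOrderedAddMonoid Γ] (hArm : IsGammaArmendariz R Γ)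
    (hSA : IsRightSA R) : IsRightSA (HahnSeries Γ R) := by
  intro I J hI hJ
  obtain ⟨K₀, hK₀, hEq⟩ := hSA (coeffSet I) (coeffSet J) (isTwoSidedIdeal_coeffSet hI)
    (isTwoSidedIdeal_coeffSet hJ)
  rw [setOf_exists_eq_add] at hEq
  refine ⟨withCoeffsIn K₀, isTwoSidedIdeal_withCoeffsIn hK₀, ?_⟩
  rw [setOf_exists_eq_add, rAnn_eq_withCoeffsIn_rAnn_coeffSet hArm,
    rAnn_eq_withCoeffsIn_rAnn_coeffSet hArm,
    ← withCoeffsIn_add (zero_mem_rAnn _) (zero_mem_rAnn _), hEq, rAnn_withCoeffsIn hK₀.1]
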